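/- Let m ≥ 1, k, l ∈ ℕ, let P : ℝ^m → ℝ_{0,m} be a left monogenic function (∂_x P = 0) that is homogeneous of degree k and satisfies Σ_{j=1}^m e_j P(x) e_j = (−1)^l (2l − m) P(x) for all x, and let B : (0,∞) → ℝ be continuously differentiable. Then for all x ≠ 0, writing r = |x|, the right Dirac derivative satisfies (B(r) ι(x) P(x))∂_x = (−1)^l(2l−m) B(r) P(x) + (B′(r)/r) ι(x) P(x) ι(x). -/

import Mathlib

/-! By the product rule, `(B(r) ι(x) P)∂_x` splits into `B(r) ι(x) (P∂_x) + B(r) Σⱼ eⱼ P eⱼ`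
plus `(B′(r)/r) ι(x) P ι(x)`, the last term because `∂ⱼ r = xⱼ / r` and `Σⱼ xⱼ eⱼ = ι(x)`.
The first term vanishes: the relation `Σⱼ eⱼ P eⱼ = c P` passes to the partial derivatives of `P`,
and applying `a ↦ Σⱼ eⱼ a eⱼ` to `∂_x P = 0`, with `eⱼ eᵢ = -eᵢ eⱼ - 2δᵢⱼ`, gives
`0 = -c ∂_x P - 2 P∂_x`, so `P∂_x = 0`. -/

noncomputable section

open scoped BigOperators

/-- The `ℓ¹`-norm with respect to a Hamel basis.  On a finite-dimensional real
vector space (such as the Clifford algebra `ℝ_{0,m}`) the induced topology is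
the canonical one. -/
def hamelNorm (V : Type) [AddCommGroup V] [Module ℝ V] : AddGroupNorm V where
  toFun v := ∑ i ∈ ((Module.Basis.ofVectorSpace ℝ V).repr v).support,
      |(Module.Basis.ofVectorSpace ℝ V).repr v i|
  map_zero' := by simp
  add_le' := by
    intro x y
    classical
    set b := Module.Basis.ofVectorSpace ℝ V
    have hrepr : b.repr (x + y) = b.repr x + b.repr y := map_add _ _ _
    calc ∑ i ∈ (b.repr (x + y)).support, |b.repr (x + y) i|
        ≤ ∑ i ∈ (b.repr x).support ∪ (b.repr y).support, |b.repr (x + y) i| := by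
          refine Finset.sum_le_sum_of_subset_of_nonneg ?_ (fun i _ _ => abs_nonneg _)
          rw [hrepr]; exact Finsupp.support_add
      _ ≤ ∑ i ∈ (b.repr x).support ∪ (b.repr y).support, (|b.repr x i| + |b.repr y i|) := by
          refine Finset.sum_le_sum fun i _ => ?_
          rw [hrepr, Finsupp.add_apply]; exact abs_add_le _ _
      _ = (∑ i ∈ (b.repr x).support ∪ (b.repr y).support, |b.repr x i|)
            + ∑ i ∈ (b.repr x).support ∪ (b.repr y).support, |b.repr y i| :=
          Finset.sum_add_distrib
      _ = (∑ i ∈ (b.repr x).support, |b.repr x i|)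
            + ∑ i ∈ (b.repr y).support, |b.repr y i| := by
          rw [← Finset.sum_subset Finset.subset_union_left
              (fun i _ hi => by simp [Finsupp.notMem_support_iff.mp hi]),
            ← Finset.sum_subset Finset.subset_union_right
              (fun i _ hi => by simp [Finsupp.notMem_support_iff.mp hi])]
  neg' := by
    intro x
    simp [map_neg]
  eq_zero_of_map_eq_zero' := by
    classical
    intro x hx
    set b := Module.Basis.ofVectorSpace ℝ V
    have h0 : b.repr x = 0 := by
      ext i
      by_cases hi : i ∈ (b.repr x).support
      · exact abs_eq_zero.mp
          ((Finset.sum_eq_zero_iff_of_nonneg (fun i _ => abs_nonneg _)).mp hx i hi)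
      · simpa using Finsupp.notMem_support_iff.mp hi
    exact b.repr.map_eq_zero_iff.mp h0

/-- The quadratic form `Q(v) = -‖v‖²` on `ℝ^m`. -/
def Qneg (m : ℕ) : QuadraticForm ℝ (EuclideanSpace ℝ (Fin m)) :=
  (QuadraticMap.weightedSumSquares ℝ fun _ : Fin m => (-1 : ℝ)).comp
    (WithLp.linearEquiv 2 ℝ (Fin m → ℝ)).toLinearMap

/-- The real Clifford algebra `ℝ_{0,m}`. -/
abbrev Cl (m : ℕ) := CliffordAlgebra (Qneg m)

/-- The canonical embedding `ι : ℝ^m → ℝ_{0,m}`. -/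
abbrev ιC (m : ℕ) : EuclideanSpace ℝ (Fin m) →ₗ[ℝ] Cl m := CliffordAlgebra.ι (Qneg m)

/-- The generators `e₁, …, e_m` of `ℝ_{0,m}`. -/
def eC (m : ℕ) (j : Fin m) : Cl m := ιC m (EuclideanSpace.single j 1)

noncomputable instance (m : ℕ) : NormedAddCommGroup (Cl m) :=
  (hamelNorm (Cl m)).toNormedAddCommGroup

noncomputable instance (m : ℕ) : NormedSpace ℝ (Cl m) where
  norm_smul_le a v := by
    classical
    have hv : ‖v‖ = ∑ i ∈ ((Module.Basis.ofVectorSpace ℝ (Cl m)).repr v).support,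
        |(Module.Basis.ofVectorSpace ℝ (Cl m)).repr v i| := rfl
    have hav : ‖a • v‖ = ∑ i ∈ ((Module.Basis.ofVectorSpace ℝ (Cl m)).repr (a • v)).support,
        |(Module.Basis.ofVectorSpace ℝ (Cl m)).repr (a • v) i| := rfl
    set b := Module.Basis.ofVectorSpace ℝ (Cl m)
    have hrepr : b.repr (a • v) = a • b.repr v := map_smul _ _ _
    rw [hav, hv, Real.norm_eq_abs]
    calc ∑ i ∈ (b.repr (a • v)).support, |b.repr (a • v) i|
        ≤ ∑ i ∈ (b.repr v).support, |b.repr (a • v) i| := by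
          refine Finset.sum_le_sum_of_subset_of_nonneg ?_ (fun i _ _ => abs_nonneg _)
          rw [hrepr]; exact Finsupp.support_smul
      _ = ∑ i ∈ (b.repr v).support, |a| * |b.repr v i| := by
          refine Finset.sum_congr rfl fun i _ => ?_
          rw [hrepr, Finsupp.smul_apply, smul_eq_mul, abs_mul]
      _ = |a| * ∑ i ∈ (b.repr v).support, |b.repr v i| := by rw [Finset.mul_sum]

/-- The Dirac operator acting from the left: `∂_x f = Σⱼ eⱼ (∂_{xⱼ} f)`. -/
def diracL (m : ℕ) (f : EuclideanSpace ℝ (Fin m) → Cl m) (x : EuclideanSpace ℝ (Fin m)) : Cl m :=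
  ∑ j, eC m j * fderiv ℝ f x (EuclideanSpace.single j 1)

/-- The Dirac operator acting from the right: `f ∂_x = Σⱼ (∂_{xⱼ} f) eⱼ`. -/
def diracR (m : ℕ) (f : EuclideanSpace ℝ (Fin m) → Cl m) (x : EuclideanSpace ℝ (Fin m)) : Cl m :=
  ∑ j, fderiv ℝ f x (EuclideanSpace.single j 1) * eC m j


open scoped InnerProductSpace

/- Finite-dimensionality of `Cl m` is what makes multiplication, and hence the product rule,
available for the Hamel-basis norm. -/
instance ExteriorAlgebra.instModuleFinite {K V : Type*} [Field K] [AddCommGroup V] [Module K V]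
    [FiniteDimensional K V] : Module.Finite K (ExteriorAlgebra K V) := by
  have hbot : ∀ n, Module.finrank K V < n → ⋀[K]^n V = ⊥ := fun n hn =>
    Submodule.finrank_eq_zero.mp (by rw [exteriorPower.finrank_eq, Nat.choose_eq_zero_of_lt hn])
  have htop : ⨆ n ∈ Finset.range (Module.finrank K V + 1), ⋀[K]^n V = ⊤ := by
    rw [← (DirectSum.Decomposition.isInternal (fun n : ℕ => ⋀[K]^n V)).submodule_iSup_eq_top]
    refine le_antisymm (iSup₂_le fun n _ => le_iSup _ n) (iSup_le fun n => ?_)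
    by_cases hn : n < Module.finrank K V + 1
    · exact le_biSup (fun n => ⋀[K]^n V) (Finset.mem_range.mpr hn)
    · rw [hbot n (by omega)]
      exact bot_le
  rw [Module.finite_def, ← htop]
  exact Submodule.fg_biSup _ _ fun n _ => Module.Finite.iff_fg.mp inferInstance

instance CliffordAlgebra.instModuleFinite {K V : Type*} [Field K] [Invertible (2 : K)]
    [AddCommGroup V] [Module K V] [FiniteDimensional K V] (Q : QuadraticForm K V) :
    Module.Finite K (CliffordAlgebra Q) :=
  Module.Finite.equiv (CliffordAlgebra.equivExterior Q).symm

theorem hasFDerivAt_norm {E : Type*} [NormedAddCommGroup E] [InnerProductSpace ℝ E] {x : E}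
    (hx : x ≠ 0) : HasFDerivAt (fun y : E => ‖y‖) (‖x‖⁻¹ • innerSL ℝ x) x := by
  have hsqrt := (Real.hasDerivAt_sqrt (by positivity : ‖x‖ ^ 2 ≠ 0)).comp_hasFDerivAt x
    (hasStrictFDerivAt_norm_sq x).hasFDerivAt
  rw [show (fun y : E => ‖y‖) = Real.sqrt ∘ fun y => ‖y‖ ^ 2 from
    funext fun y => (Real.sqrt_sq (norm_nonneg y)).symm]
  refine hsqrt.congr_fderiv ?_
  ext v
  simp only [Real.sqrt_sq (norm_nonneg x), smul_apply, coe_innerSL_apply,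
    nsmul_eq_mul, Nat.cast_ofNat, smul_eq_mul]
  field_simp

theorem ContinuousLinearMap.map_fderiv_eq_smul {𝕜 E F : Type*} [NontriviallyNormedField 𝕜]
    [NormedAddCommGroup E] [NormedSpace 𝕜 E] [NormedAddCommGroup F] [NormedSpace 𝕜 F]
    (L : F →L[𝕜] F) (c : 𝕜) {f : E → F} {x : E} (hf : DifferentiableAt 𝕜 f x)
    (h : ∀ y, L (f y) = c • f y) (v : E) : L (fderiv 𝕜 f x v) = c • fderiv 𝕜 f x v := by
  have hcomp : HasFDerivAt (L ∘ f) (L.comp (fderiv 𝕜 f x)) x :=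
    L.hasFDerivAt.comp x hf.hasFDerivAt
  have hsmul : HasFDerivAt (L ∘ f) (c • fderiv 𝕜 f x) x := by
    rw [show L ∘ f = c • f from funext h]
    exact hf.hasFDerivAt.const_smul c
  exact congrArg (· v) (hcomp.unique hsmul)

section Clifford

variable {m : ℕ}

theorem Qneg_single (j : Fin m) : Qneg m (EuclideanSpace.single j 1) = -1 := by
  simp [Qneg, QuadraticMap.weightedSumSquares_apply, Pi.single_apply, Finset.sum_ite_eq']

theorem polar_Qneg_single_single {i j : Fin m} (h : i ≠ j) :
    QuadraticMap.polar (Qneg m) (EuclideanSpace.single i 1) (EuclideanSpace.single j 1) = 0 := by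
  simp [QuadraticMap.polar, Qneg, QuadraticMap.weightedSumSquares_apply, Pi.single_apply,
    mul_add, mul_ite, Finset.sum_add_distrib, Finset.sum_ite_eq', h, h.symm]

theorem eC_mul_self (j : Fin m) : eC m j * eC m j = -1 := by
  rw [eC, CliffordAlgebra.ι_sq_scalar, Qneg_single, map_neg, map_one]

theorem eC_mul_eC_of_ne {i j : Fin m} (h : i ≠ j) : eC m i * eC m j = -(eC m j * eC m i) := by
  have := CliffordAlgebra.ι_mul_ι_add_swap (Q := Qneg m)
    (EuclideanSpace.single i 1) (EuclideanSpace.single j 1)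
  rw [polar_Qneg_single_single h, map_zero] at this
  exact eq_neg_of_add_eq_zero_left this

theorem ιC_eq_sum (v : EuclideanSpace ℝ (Fin m)) : ιC m v = ∑ j, v j • eC m j := by
  conv_lhs => rw [← (EuclideanSpace.basisFun (Fin m) ℝ).sum_repr v]
  simp [eC]

variable (m) in
def sandwichSum : Cl m →ₗ[ℝ] Cl m :=
  ∑ j, LinearMap.mulRight ℝ (eC m j) ∘ₗ LinearMap.mulLeft ℝ (eC m j)

theorem sandwichSum_apply (a : Cl m) : sandwichSum m a = ∑ j, eC m j * a * eC m j := by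
  simp [sandwichSum, LinearMap.sum_apply]

theorem sandwichSum_eC_mul (i : Fin m) (a : Cl m) :
    sandwichSum m (eC m i * a) = -(eC m i * sandwichSum m a) - (2 : ℝ) • (a * eC m i) := by
  have hterm : ∀ j, eC m j * (eC m i * a) * eC m j
      = -(eC m i * (eC m j * a * eC m j)) - if j = i then (2 : ℝ) • (a * eC m i) else 0 := by
    intro j
    by_cases hji : j = i
    · subst hji
      simp only [if_pos, ← mul_assoc, eC_mul_self, neg_mul, one_mul]
      module
    · rw [if_neg hji, ← mul_assoc, eC_mul_eC_of_ne hji]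
      simp [mul_assoc]
  rw [sandwichSum_apply, sandwichSum_apply, Finset.sum_congr rfl fun j _ => hterm j,
    Finset.sum_sub_distrib, Finset.sum_ite_eq', if_pos (Finset.mem_univ i),
    Finset.sum_neg_distrib, Finset.mul_sum]

theorem sum_mul_eC_eq_zero {c : ℝ} {b : Fin m → Cl m} (hb : ∀ i, sandwichSum m (b i) = c • b i)
    (hleft : ∑ j, eC m j * b j = 0) : ∑ j, b j * eC m j = 0 := by
  have h : sandwichSum m (∑ j, eC m j * b j)
      = -c • ∑ j, eC m j * b j - (2 : ℝ) • ∑ j, b j * eC m j := by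
    simp only [map_sum, sandwichSum_eC_mul, hb, Finset.sum_sub_distrib, Finset.smul_sum]
    congr 1
    exact Finset.sum_congr rfl fun j _ => by rw [mul_smul_comm, neg_smul]
  rw [hleft, map_zero, smul_zero, zero_sub, eq_comm, neg_eq_zero, smul_eq_zero] at h
  exact h.resolve_left two_ne_zero

theorem diracR_eq_zero_of_diracL_eq_zero {c : ℝ} {P : EuclideanSpace ℝ (Fin m) → Cl m}
    {x : EuclideanSpace ℝ (Fin m)} (hP : DifferentiableAt ℝ P x)
    (hPc : ∀ y, sandwichSum m (P y) = c • P y) (hleft : diracL m P x = 0) :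
    diracR m P x = 0 :=
  sum_mul_eC_eq_zero
    (fun _ => (LinearMap.toContinuousLinearMap (sandwichSum m)).map_fderiv_eq_smul c hP hPc _) hleft

variable (m) in
def mulCLM : Cl m →L[ℝ] Cl m →L[ℝ] Cl m :=
  LinearMap.toContinuousLinearMap
    (LinearMap.toContinuousLinearMap.toLinearMap ∘ₗ LinearMap.mul ℝ (Cl m))

theorem mulCLM_apply (a b : Cl m) : mulCLM m a b = a * b := rfl

theorem fderiv_radial_smul_ιC_mul_apply {B : ℝ → ℝ} {P : EuclideanSpace ℝ (Fin m) → Cl m}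
    {x : EuclideanSpace ℝ (Fin m)} (hx : x ≠ 0) (hB : DifferentiableAt ℝ B ‖x‖)
    (hP : DifferentiableAt ℝ P x) (v : EuclideanSpace ℝ (Fin m)) :
    fderiv ℝ (fun y => B ‖y‖ • (ιC m y * P y)) x v
      = B ‖x‖ • (ιC m x * fderiv ℝ P x v + ιC m v * P x)
        + (deriv B ‖x‖ * (⟪x, v⟫_ℝ / ‖x‖)) • (ιC m x * P x) := by
  have hradial := hB.hasDerivAt.comp_hasFDerivAt x (hasFDerivAt_norm hx)
  have hprod := (mulCLM m).hasFDerivAt_of_bilinear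
    (LinearMap.toContinuousLinearMap (ιC m)).hasFDerivAt hP.hasFDerivAt
  have hf : HasFDerivAt (fun y => B ‖y‖ • (ιC m y * P y)) _ x := hradial.smul hprod
  rw [hf.fderiv]
  simp [mulCLM_apply, div_eq_inv_mul, mul_smul]

end Clifford

theorem diracR_B_smul_xP_general (m l : ℕ) (P : EuclideanSpace ℝ (Fin m) → Cl m)
    (hP : ContDiff ℝ 1 P) (hPmono : ∀ x, diracL m P x = 0)
    (hPl : ∀ x, ∑ j, eC m j * P x * eC m j
      = ((-1 : ℝ) ^ l * (2 * (l : ℝ) - (m : ℝ))) • P x)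
    (B : ℝ → ℝ) (hB : ContDiffOn ℝ 1 B (Set.Ioi 0))
    (x : EuclideanSpace ℝ (Fin m)) (hx : x ≠ 0) :
    diracR m (fun y => B ‖y‖ • (ιC m y * P y)) x
      = ((-1 : ℝ) ^ l * (2 * (l : ℝ) - (m : ℝ)) * B ‖x‖) • P x
        + (deriv B ‖x‖ / ‖x‖) • (ιC m x * P x * ιC m x) := by
  have hBx : DifferentiableAt ℝ B ‖x‖ :=
    (hB.contDiffAt (Ioi_mem_nhds (norm_pos_iff.mpr hx))).differentiableAt one_ne_zero
  have hPx : DifferentiableAt ℝ P x := hP.differentiable one_ne_zero x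
  have hright : diracR m P x = 0 :=
    diracR_eq_zero_of_diracL_eq_zero hPx (fun y => (sandwichSum_apply _).trans (hPl y)) (hPmono x)
  calc diracR m (fun y => B ‖y‖ • (ιC m y * P y)) x
      = ∑ j, (B ‖x‖ • (ιC m x * fderiv ℝ P x (EuclideanSpace.single j 1) + eC m j * P x)
          + (deriv B ‖x‖ / ‖x‖ * x j) • (ιC m x * P x)) * eC m j := by
        simp only [diracR, fderiv_radial_smul_ιC_mul_apply hx hBx hPx,
          EuclideanSpace.inner_single_right, conj_trivial, one_mul, mul_div_assoc',
          div_mul_eq_mul_div, eC]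
    _ = B ‖x‖ • (ιC m x * diracR m P x + ∑ j, eC m j * P x * eC m j)
          + (deriv B ‖x‖ / ‖x‖) • (ιC m x * P x * ∑ j, x j • eC m j) := by
        simp only [diracR, add_mul, smul_mul_assoc, mul_assoc, smul_add, Finset.sum_add_distrib,
          Finset.mul_sum, Finset.smul_sum, mul_smul, mul_smul_comm]
    _ = _ := by
        rw [hright, mul_zero, hPl, ← ιC_eq_sum]
        module

/-- `(B(r) ι(x) P(x))∂_x = (-1)^l(2l-m) B(r) P(x)
+ (B′(r)/r) ι(x) P(x) ι(x)`. -/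
theorem diracR_B_smul_xP (m k l : ℕ) (hm : 1 ≤ m) (P : EuclideanSpace ℝ (Fin m) → Cl m)
    (hP : ContDiff ℝ 1 P) (hPmono : ∀ x, diracL m P x = 0)
    (hPhom : ∀ (t : ℝ) (x : EuclideanSpace ℝ (Fin m)), P (t • x) = t ^ k • P x)
    (hPl : ∀ x, ∑ j, eC m j * P x * eC m j
      = ((-1 : ℝ) ^ l * (2 * (l : ℝ) - (m : ℝ))) • P x)
    (B : ℝ → ℝ) (hB : ContDiffOn ℝ 1 B (Set.Ioi 0))
    (x : EuclideanSpace ℝ (Fin m)) (hx : x ≠ 0) :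
    diracR m (fun y => B ‖y‖ • (ιC m y * P y)) x
      = ((-1 : ℝ) ^ l * (2 * (l : ℝ) - (m : ℝ)) * B ‖x‖) • P x
        + (deriv B ‖x‖ / ‖x‖) • (ιC m x * P x * ιC m x) :=
  diracR_B_smul_xP_general m l P hP hPmono hPl B hB x hx

end
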